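/- (Approximation guarantee of JAG-PQ-HEUR) Suppose all entries of the n₁×n₂ matrix A are strictly positive, 1 ≤ P < n₁, 1 ≤ Q < n₂, m = P·Q. If the main dimension is partitioned into P intervals optimally with respect to the column-sum projection, and each resulting stripe is partitioned optimally into Q intervals along the other dimension, then the resulting maximum rectangle load is at most (1 + Δ P/n₁)(1 + Δ Q/n₂) · (sum_{i,j} A[i][j])/(P Q), where Δ = (max_{i,j} A[i][j])/(min_{i,j} A[i][j]). -/

import Mathlib

/-- Optimal maximum interval load for partitioning the length-`n` prefix of the
array `f` into `k` contiguous (possibly empty) intervals. -/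
noncomputable def opt1D (f : ℕ → ℝ) (n k : ℕ) : ℝ :=
  sInf {L | ∃ c : ℕ → ℕ, Monotone c ∧ c 0 = 0 ∧ c k = n ∧
    L = ⨆ j : Fin k, ∑ i ∈ Finset.Ico (c j.1) (c (j.1 + 1)), f i}

/-!
Cutting a nonnegative array at the shortest prefixes that reach the multiples of `total / k`
gives `k` intervals of load at most `total / k + max`. If every entry is at most `Δ` times every
other one, the maximum entry is at most `Δ · total / n`, so the optimal load is at most
`(total / k)(1 + Δ k / n)`. Entrywise comparability of the matrix passes to its row sums and to
the column sums of any stripe, so the bound applies first to the row projection (bounding the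
load of the chosen stripe by `(ΣA / P)(1 + Δ P / n₁)`) and then to the stripe's projection.
-/

open Finset

lemma le_mul_sum_div_card_of_le_mul {ι : Type*} {s : Finset ι} {g : ι → ℝ} {Δ : ℝ}
    (h : ∀ x ∈ s, ∀ y ∈ s, g x ≤ Δ * g y) {x : ι} (hx : x ∈ s) :
    g x ≤ Δ * (∑ y ∈ s, g y) / #s := by
  rw [le_div_iff₀ (by exact_mod_cast card_pos.2 ⟨x, hx⟩)]
  calc g x * #s = ∑ _y ∈ s, g x := by rw [sum_const, nsmul_eq_mul, mul_comm]
    _ ≤ ∑ y ∈ s, Δ * g y := sum_le_sum (h x hx)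
    _ = Δ * ∑ y ∈ s, g y := (mul_sum _ _ _).symm

lemma le_sup'_div_inf'_mul {α : Type*} {s : Finset α} (hs : s.Nonempty) {g : α → ℝ}
    (hg : ∀ x ∈ s, 0 < g x) {x y : α} (hx : x ∈ s) (hy : y ∈ s) :
    g x ≤ s.sup' hs g / s.inf' hs g * g y := by
  have hinf : 0 < s.inf' hs g := (lt_inf'_iff hs).2 hg
  calc g x ≤ s.sup' hs g := le_sup' g hx
    _ = s.sup' hs g / s.inf' hs g * s.inf' hs g := (div_mul_cancel₀ _ hinf.ne').symm
    _ ≤ s.sup' hs g / s.inf' hs g * g y := by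
      gcongr
      · exact div_nonneg ((hg x hx).le.trans (le_sup' g hx)) hinf.le
      · exact inf'_le g hy

section OneDimensional

variable {f : ℕ → ℝ} {n k j : ℕ}

lemma opt1D_le_of_partition (hf : ∀ i < n, 0 ≤ f i) (hk : 0 < k) {c : ℕ → ℕ}
    (hc : Monotone c) (hc0 : c 0 = 0) (hck : c k = n) {B : ℝ}
    (hB : ∀ j < k, ∑ i ∈ Ico (c j) (c (j + 1)), f i ≤ B) : opt1D f n k ≤ B := by
  have : Nonempty (Fin k) := ⟨⟨0, hk⟩⟩
  refine csInf_le_of_le ⟨0, ?_⟩ ⟨c, hc, hc0, hck, rfl⟩ (ciSup_le fun j => hB j j.2)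
  rintro _ ⟨c', hc', -, hc'k, rfl⟩
  have hfirst : 0 ≤ ∑ i ∈ Ico (c' 0) (c' 1), f i := sum_nonneg fun i hi =>
    hf i ((mem_Ico.mp hi).2.trans_le (hc'k ▸ hc' hk))
  exact hfirst.trans <|
    le_ciSup (f := fun j : Fin k => ∑ i ∈ Ico (c' j) (c' (j + 1)), f i)
      (Set.finite_range _).bddAbove ⟨0, hk⟩

/-- Cut `j` is the shortest prefix carrying at least the fraction `j / k` of the total load;
cut `k` is forced to be `n`, so that trailing zeros cannot end the partition early. -/
noncomputable def greedyCut (f : ℕ → ℝ) (n k j : ℕ) : ℕ :=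
  Nat.find (⟨n, Or.inl le_rfl⟩ : ∃ m, n ≤ m ∨
    j < k ∧ j * ∑ i ∈ range n, f i ≤ k * ∑ i ∈ range m, f i)

lemma greedyCut_le : greedyCut f n k j ≤ n :=
  Nat.find_min' _ (Or.inl le_rfl)

lemma greedyCut_zero (hk : 0 < k) : greedyCut f n k 0 = 0 :=
  (Nat.find_eq_zero _).2 (Or.inr ⟨hk, by simp⟩)

lemma greedyCut_self : greedyCut f n k k = n :=
  greedyCut_le.antisymm ((Nat.le_find_iff _ _).2 fun m hm => by simp [hm])

lemma monotone_greedyCut (hf : ∀ i < n, 0 ≤ f i) : Monotone (greedyCut f n k) := by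
  have hT : 0 ≤ ∑ i ∈ range n, f i := sum_nonneg fun i hi => hf i (mem_range.mp hi)
  intro a b hab
  refine Nat.find_mono fun m => Or.imp_right fun ⟨hb, hm⟩ => ⟨hab.trans_lt hb, ?_⟩
  exact le_trans (by gcongr) hm

lemma mul_sum_le_sum_greedyCut (hf : ∀ i < n, 0 ≤ f i) (hj : j ≤ k) :
    j * ∑ i ∈ range n, f i ≤ k * ∑ i ∈ range (greedyCut f n k j), f i := by
  have hT : 0 ≤ ∑ i ∈ range n, f i := sum_nonneg fun i hi => hf i (mem_range.mp hi)
  rcases Nat.find_spec (⟨n, Or.inl le_rfl⟩ : ∃ m, n ≤ m ∨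
      j < k ∧ j * ∑ i ∈ range n, f i ≤ k * ∑ i ∈ range m, f i) with hn | ⟨-, hle⟩
  · rw [greedyCut_le.antisymm (show n ≤ greedyCut f n k j from hn)]
    gcongr
  · exact hle

lemma sum_greedyCut_le (hf : ∀ i < n, 0 ≤ f i) {M : ℝ} (hM : ∀ i < n, f i ≤ M)
    (hM0 : 0 ≤ M) (hj : j ≤ k) :
    k * ∑ i ∈ range (greedyCut f n k j), f i ≤ j * ∑ i ∈ range n, f i + k * M := by
  have hT : 0 ≤ ∑ i ∈ range n, f i := sum_nonneg fun i hi => hf i (mem_range.mp hi)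
  obtain rfl | hj := hj.eq_or_lt
  · rw [greedyCut_self]
    exact le_add_of_nonneg_right (by positivity)
  cases hc : greedyCut f n k j with
  | zero =>
    simp only [range_zero, sum_empty, mul_zero]
    positivity
  | succ m =>
    have hmin :
        ¬(n ≤ m ∨ j < k ∧ j * ∑ i ∈ range n, f i ≤ k * ∑ i ∈ range m, f i) :=
      Nat.find_min _ (show m < greedyCut f n k j by omega)
    push Not at hmin
    have hmn : m < n := hmin.1
    rw [sum_range_succ, mul_add]
    linarith [hmin.2 hj, mul_le_mul_of_nonneg_left (hM m hmn) (Nat.cast_nonneg (α := ℝ) k)]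

lemma opt1D_le_sum_div_add (hf : ∀ i < n, 0 ≤ f i) (hk : 0 < k) {M : ℝ}
    (hM : ∀ i < n, f i ≤ M) (hM0 : 0 ≤ M) :
    opt1D f n k ≤ (∑ i ∈ range n, f i) / k + M := by
  refine opt1D_le_of_partition hf hk (monotone_greedyCut hf) (greedyCut_zero hk) greedyCut_self
    fun j hj => ?_
  have hkR : (0 : ℝ) < k := by exact_mod_cast hk
  rw [sum_Ico_eq_sub _ (monotone_greedyCut hf j.le_succ), div_add' _ _ _ hkR.ne',
    le_div_iff₀ hkR]
  have hupper := sum_greedyCut_le hf hM hM0 hj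
  have hlower := mul_sum_le_sum_greedyCut hf hj.le
  push_cast at hupper
  linarith

lemma opt1D_le_of_le_mul (hf : ∀ i < n, 0 ≤ f i) (hk : 0 < k) {Δ : ℝ} (hΔ : 0 ≤ Δ)
    (h : ∀ i < n, ∀ i' < n, f i ≤ Δ * f i') :
    opt1D f n k ≤ (∑ i ∈ range n, f i) / k * (1 + Δ * k / n) := by
  have hT : 0 ≤ ∑ i ∈ range n, f i := sum_nonneg fun i hi => hf i (mem_range.mp hi)
  have hM : ∀ i < n, f i ≤ Δ * (∑ i ∈ range n, f i) / n := fun i hi => by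
    simpa using
      le_mul_sum_div_card_of_le_mul (s := range n) (by simpa using h) (mem_range.2 hi)
  calc opt1D f n k ≤ (∑ i ∈ range n, f i) / k + Δ * (∑ i ∈ range n, f i) / n :=
        opt1D_le_sum_div_add hf hk hM (by positivity)
    _ = _ := by
      have : (k : ℝ) ≠ 0 := by exact_mod_cast hk.ne'
      field_simp

end OneDimensional

/-- guarantee of JAG-PQ-HEUR: let `A` be an `n₁ × n₂` strictly
positive matrix, `Δ = (max A)/(min A)`, `1 ≤ P < n₁`, `1 ≤ Q < n₂`. If the rows
are cut into `P` stripes `r` optimally for the column-sum projection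
`C i = ∑_j A i j`, then partitioning each stripe optimally into `Q` column
intervals yields rectangles of load at most
`(1 + Δ P/n₁)(1 + Δ Q/n₂) · (∑ A)/(P·Q)`. -/
theorem stmt_7 (n₁ n₂ P Q : ℕ) (hP : 1 ≤ P) (hP' : P < n₁) (hQ : 1 ≤ Q)
    (hQ' : Q < n₂) (A : ℕ → ℕ → ℝ) (hpos : ∀ i < n₁, ∀ j < n₂, 0 < A i j)
    (Δ : ℝ)
    (hΔ : Δ = ((Finset.range n₁ ×ˢ Finset.range n₂).sup'
        ((Finset.nonempty_range_iff.mpr (by omega)).product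
          (Finset.nonempty_range_iff.mpr (by omega))) (fun p => A p.1 p.2)) /
      ((Finset.range n₁ ×ˢ Finset.range n₂).inf'
        ((Finset.nonempty_range_iff.mpr (by omega)).product
          (Finset.nonempty_range_iff.mpr (by omega))) (fun p => A p.1 p.2)))
    (r : ℕ → ℕ) (hr : Monotone r) (hrP : r P = n₁)
    (hropt : (⨆ t : Fin P, ∑ i ∈ Finset.Ico (r t.1) (r (t.1 + 1)),
        ∑ j ∈ Finset.range n₂, A i j) =
      opt1D (fun i => ∑ j ∈ Finset.range n₂, A i j) n₁ P) :
    ∀ t < P, opt1D (fun j => ∑ i ∈ Finset.Ico (r t) (r (t + 1)), A i j) n₂ Q ≤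
      (1 + Δ * P / n₁) * (1 + Δ * Q / n₂) *
        (∑ i ∈ Finset.range n₁, ∑ j ∈ Finset.range n₂, A i j) / (P * Q) := by
  intro t ht
  have hcmp : ∀ i < n₁, ∀ i' < n₁, ∀ j < n₂, ∀ j' < n₂, A i j ≤ Δ * A i' j' :=
    fun i hi i' hi' j hj j' hj' => hΔ ▸ le_sup'_div_inf'_mul (x := (i, j)) (y := (i', j')) _
      (fun p hp => hpos _ (mem_range.1 (mem_product.1 hp).1) _ (mem_range.1 (mem_product.1 hp).2))
      (mem_product.2 ⟨mem_range.2 hi, mem_range.2 hj⟩)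
      (mem_product.2 ⟨mem_range.2 hi', mem_range.2 hj'⟩)
  have hΔ0 : 0 ≤ Δ := by
    have h00 := hpos 0 (by omega) 0 (by omega)
    nlinarith [hcmp 0 (by omega) 0 (by omega) 0 (by omega) 0 (by omega)]
  have hstripe : ∀ i ∈ Ico (r t) (r (t + 1)), i < n₁ := fun i hi =>
    (mem_Ico.1 hi).2.trans_le (hrP ▸ hr ht)
  have hrows : opt1D (fun i => ∑ j ∈ range n₂, A i j) n₁ P ≤
      (∑ i ∈ range n₁, ∑ j ∈ range n₂, A i j) / P * (1 + Δ * P / n₁) :=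
    opt1D_le_of_le_mul (fun i hi => sum_nonneg fun j hj => (hpos i hi j (mem_range.1 hj)).le) hP
      hΔ0 fun i hi i' hi' => (sum_le_sum fun j hj => hcmp i hi i' hi' j (mem_range.1 hj) j
        (mem_range.1 hj)).trans_eq (mul_sum _ _ _).symm
  have hcols : opt1D (fun j => ∑ i ∈ Ico (r t) (r (t + 1)), A i j) n₂ Q ≤
      (∑ i ∈ Ico (r t) (r (t + 1)), ∑ j ∈ range n₂, A i j) / Q * (1 + Δ * Q / n₂) := by
    rw [sum_comm]
    exact opt1D_le_of_le_mul (fun j hj => sum_nonneg fun i hi => (hpos i (hstripe i hi) j hj).le)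
      hQ hΔ0 fun j hj j' hj' => (sum_le_sum fun i hi =>
        hcmp i (hstripe i hi) i (hstripe i hi) j hj j' hj').trans_eq (mul_sum _ _ _).symm
  have hload : ∑ i ∈ Ico (r t) (r (t + 1)), ∑ j ∈ range n₂, A i j ≤
      opt1D (fun i => ∑ j ∈ range n₂, A i j) n₁ P :=
    hropt ▸ le_ciSup
      (f := fun s : Fin P => ∑ i ∈ Ico (r s) (r (s + 1)), ∑ j ∈ range n₂, A i j)
      (Set.finite_range _).bddAbove ⟨t, ht⟩
  calc _ ≤ _ := hcols
    _ ≤ (∑ i ∈ range n₁, ∑ j ∈ range n₂, A i j) / P * (1 + Δ * P / n₁) / Q *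
        (1 + Δ * Q / n₂) := by
      gcongr
      exact hload.trans hrows
    _ = _ := by ring
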